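/- Coherent flattening via embezzlement, first inequality: Let δ ∈ (0,1/15), γ ∈ (0,1), and d a positive integer such that d/γ is an integer. Let ρ = ∑_{c ∈ I} q(c) |v_c⟩⟨v_c| be a density matrix on ℂ^d, where I is a finite index set, {|v_c⟩}_{c∈I} is an orthonormal family, every q(c) > 0, and every b(c) := q(c)·d/γ is a positive integer. Let a := (d/γ)·max_{c∈I} q(c) and let n, N be integers with (n:ℝ) ≥ (a:ℝ)^{1/δ} and N ≥ n. For each c ∈ I, let W_{b(c)} be a unitary on ℂ^N ⊗ ℂ^a satisfying W_{b(c)}(e_i ⊗ e_0) = e_{⌊i/b(c)⌋} ⊗ e_{(i mod b(c))} for all 0 ≤ i ≤ N−1, and set W := ∑_{c∈I} |v_c⟩⟨v_c| ⊗ W_{b(c)} on ℂ^d ⊗ ℂ^N ⊗ ℂ^a. Then W (ρ ⊗ ξ_{a:n} ⊗ e_0 e_0*) W* ≼ (1 + 15δ) · (γ/d) ∑_{c∈I} |v_c⟩⟨v_c| ⊗ ξ_{1:n} ⊗ (∑_{e=0}^{b(c)−1} e_e e_e*) in the Loewner order. -/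

import Mathlib

open Matrix Kronecker
open scoped ComplexOrder Classical

/-- A density matrix: a positive semidefinite matrix of trace 1. -/
def IsDensityMatrix {n : Type*} [Fintype n] (ρ : Matrix n n ℂ) : Prop :=
  ρ.PosSemidef ∧ ρ.trace = 1

/-- The partial harmonic sum `S(a,n) = ∑_{i=a}^{n} 1/i`. -/
noncomputable def harmSum (a n : ℕ) : ℝ := ∑ i ∈ Finset.Icc a n, (1 : ℝ) / i

/-- The embezzling state `ξ_{a:n}` on `ℂ^N`: the diagonal (density) matrix whose `(i,i)`
entry is `1/(i·S(a,n))` for `a ≤ i ≤ n` and `0` otherwise. -/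
noncomputable def embezState (a n N : ℕ) : Matrix (Fin N) (Fin N) ℂ :=
  Matrix.of fun i j =>
    if i = j ∧ a ≤ (i : ℕ) ∧ (i : ℕ) ≤ n then
      ((1 / (((i : ℕ) : ℝ) * harmSum a n) : ℝ) : ℂ)
    else 0

/-!
Since the `v c` are orthonormal, `W` is block diagonal along the projections `|v_c⟩⟨v_c|`, so the
inequality splits into one inequality on `ℂ^N ⊗ ℂ^a` for each `c`. There `W_b` moves the weight
`1/(i S(a,n))` sitting on `e_i ⊗ e_0` to `e_{⌊i/b⌋} ⊗ e_{i mod b}`, so both sides are diagonal, and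
since `q(c) = bγ/d` and `i ≥ b⌊i/b⌋` the entrywise comparison reduces to
`S(1,n) ≤ (1 + 15δ) S(a,n)`. That holds because `S(1,a-1) ≤ 1 + log a` while
`S(1,n) ≥ log n ≥ (log a)/δ`.
-/

lemma harmSum_nonneg (a n : ℕ) : 0 ≤ harmSum a n :=
  Finset.sum_nonneg fun _ _ => by positivity

lemma harmSum_pos {a n : ℕ} (ha : 1 ≤ a) (han : a ≤ n) : 0 < harmSum a n :=
  Finset.sum_pos (fun i hi => by have : 0 < i := (Finset.mem_Icc.1 hi).1.trans_lt' ha; positivity)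
    ⟨a, Finset.mem_Icc.2 ⟨le_rfl, han⟩⟩

lemma harmSum_one_eq_harmonic (n : ℕ) : harmSum 1 n = harmonic n := by
  simp [harmSum, harmonic_eq_sum_Icc]

lemma harmSum_one_eq_harmonic_add {a n : ℕ} (ha : 1 ≤ a) (han : a ≤ n + 1) :
    harmSum 1 n = harmonic (a - 1) + harmSum a n := by
  have hIoc : ∀ k m, Finset.Icc (k + 1) m = Finset.Ioc k m := Finset.Icc_add_one_left_eq_Ioc
  rw [harmSum, harmSum, harmonic_eq_sum_Icc, hIoc 0, hIoc 0,
    show Finset.Icc a n = Finset.Ioc (a - 1) n by rw [← hIoc, Nat.sub_add_cancel ha]]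
  push_cast
  simp only [one_div]
  exact (Finset.sum_Ioc_consecutive _ (Nat.zero_le _) (by omega)).symm

lemma harmSum_one_le_mul_harmSum {δ : ℝ} (hδ0 : 0 < δ) (hδ : δ < 1 / 15) {a n : ℕ}
    (ha : 1 ≤ a) (hn : (a : ℝ) ^ (1 / δ) ≤ n) :
    harmSum 1 n ≤ (1 + 15 * δ) * harmSum a n := by
  have ha' : (1 : ℝ) ≤ a := by exact_mod_cast ha
  have han : a ≤ n := by
    have := (Real.self_le_rpow_of_one_le ha' (by rw [le_div_iff₀ hδ0]; linarith)).trans hn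
    exact_mod_cast this
  rw [harmSum_one_eq_harmonic_add ha (by omega)]
  obtain rfl | ha2 := ha.eq_or_lt
  · have := harmSum_nonneg 1 n
    simp only [Nat.sub_self, harmonic_zero, Rat.cast_zero, zero_add]
    nlinarith
  set L := Real.log a
  have hL : 0.69 < L := (Real.log_two_gt_d9.trans_le' (by norm_num)).trans_le
    (Real.log_le_log (by norm_num) (by exact_mod_cast ha2))
  have hHa : (harmonic (a - 1) : ℝ) ≤ 1 + L :=
    (harmonic_le_one_add_log _).trans (add_le_add_right (Real.log_le_log
      (by exact_mod_cast (by omega : 0 < a - 1)) (by exact_mod_cast Nat.sub_le a 1)) 1)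
  have hHn : L / δ ≤ harmonic n := by
    have hn1 : (1 : ℝ) ≤ n := by exact_mod_cast han.trans' ha
    have hlog : L / δ ≤ Real.log n := by
      rw [div_eq_inv_mul, ← one_div, ← Real.log_rpow (by positivity)]
      exact Real.log_le_log (by positivity) hn
    refine hlog.trans ((Real.log_le_log (by linarith) ?_).trans (log_add_one_le_harmonic n))
    push_cast; linarith
  have hSa : harmSum a n = harmonic n - harmonic (a - 1) := by
    rw [← harmSum_one_eq_harmonic, harmSum_one_eq_harmonic_add ha (by omega)]; ring
  have hsmall : (harmonic (a - 1) : ℝ) ≤ 15 * δ * harmSum a n :=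
    calc (harmonic (a - 1) : ℝ) ≤ 1 + L := hHa
      _ ≤ 15 * L - 15 * δ * (1 + L) := by nlinarith
      _ = 15 * δ * (L / δ - (1 + L)) := by field_simp
      _ ≤ 15 * δ * harmSum a n := by gcongr; rw [hSa]; linarith
  linarith

noncomputable def embezWeight (a n i : ℕ) : ℝ :=
  if a ≤ i ∧ i ≤ n then 1 / (i * harmSum a n) else 0

lemma embezWeight_nonneg (a n i : ℕ) : 0 ≤ embezWeight a n i := by
  unfold embezWeight
  have := harmSum_nonneg a n
  split_ifs <;> positivity

lemma embezState_eq_diagonal (a n N : ℕ) :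
    embezState a n N = diagonal fun i : Fin N => (embezWeight a n i : ℂ) := by
  ext i j
  by_cases hij : i = j
  · subst hij
    simp only [embezState, embezWeight, of_apply, diagonal_apply_eq, true_and]
    split_ifs <;> simp
  · simp [embezState, hij]

lemma mul_embezWeight_le_embezWeight_div {a b n : ℕ} {K : ℝ} (hb : 0 < b) (hba : b ≤ a)
    (hK0 : 0 ≤ K) (hK : harmSum 1 n ≤ K * harmSum a n) (i : ℕ) :
    b * embezWeight a n i ≤ K * embezWeight 1 n (i / b) := by
  rw [embezWeight]
  split_ifs with hi
  · have hj : 1 ≤ i / b ∧ i / b ≤ n :=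
      ⟨Nat.div_pos (hba.trans hi.1) hb, (Nat.div_le_self i b).trans hi.2⟩
    have hbj : ((b * (i / b) : ℕ) : ℝ) ≤ i := by exact_mod_cast Nat.mul_div_le i b
    have hS1 := harmSum_pos le_rfl (hj.1.trans hj.2)
    have hSa := harmSum_pos (hb.trans_le hba) (hi.1.trans hi.2)
    have hi0 : (0 : ℝ) < i := by exact_mod_cast hb.trans_le (hba.trans hi.1)
    have hj1 : (1 : ℝ) ≤ (i / b : ℕ) := by exact_mod_cast hj.1
    rw [embezWeight, if_pos hj, mul_one_div, mul_one_div,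
      div_le_div_iff₀ (by positivity) (by positivity)]
    push_cast at hbj
    calc (b : ℝ) * ((i / b : ℕ) * harmSum 1 n)
        ≤ (b * (i / b : ℕ)) * (K * harmSum a n) := by
          rw [mul_assoc]; gcongr
      _ ≤ i * (K * harmSum a n) := by gcongr
      _ = K * (i * harmSum a n) := by ring
  · rw [mul_zero]
    exact mul_nonneg hK0 (embezWeight_nonneg 1 n _)

lemma Finset.sum_fiber_le_of_injOn {ι κ M : Type*} [Fintype ι] [DecidableEq κ]
    [AddCommMonoid M] [PartialOrder M] [IsOrderedAddMonoid M]
    {f : ι → κ} {x : ι → M} {S : Set ι} (hf : S.InjOn f) (hS : ∀ s ∉ S, x s = 0)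
    {p : κ} {B : M} (hB : 0 ≤ B) (hx : ∀ s, f s = p → x s ≤ B) :
    ∑ s with f s = p, x s ≤ B := by
  have hsub : ∑ s with f s = p, x s = ∑ s with f s = p ∧ s ∈ S, x s := by
    rw [← Finset.filter_filter]
    refine (Finset.sum_filter_of_ne fun s _ hs => ?_).symm
    by_contra h; exact hs (hS s h)
  have hcard : (Finset.univ.filter fun s => f s = p ∧ s ∈ S).card ≤ 1 :=
    Finset.card_le_one.2 fun s hs t ht => by
      simp only [Finset.mem_filter, Finset.mem_univ, true_and] at hs ht
      exact hf hs.2 ht.2 (hs.1.trans ht.1.symm)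
  rw [hsub]
  calc _ ≤ (Finset.univ.filter fun s => f s = p ∧ s ∈ S).card • B :=
        Finset.sum_le_card_nsmul _ _ _ fun s hs => hx s (Finset.mem_filter.1 hs).2.1
    _ ≤ 1 • B := nsmul_le_nsmul_left hB hcard
    _ = B := one_nsmul B

lemma mul_diagonal_mul_conjTranspose_eq_diagonal {m n R : Type*} [Fintype n] [DecidableEq m]
    [DecidableEq n] [CommSemiring R] [StarRing R] (W : Matrix m n R) (x : n → R) (f : n → m)
    (hW : ∀ s, x s ≠ 0 → ∀ p, W p s = if p = f s then 1 else 0) :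
    W * diagonal x * Wᴴ = diagonal fun p => ∑ s with f s = p, x s := by
  ext p p'
  rw [mul_apply, diagonal_apply, Finset.sum_filter]
  simp only [mul_diagonal, conjTranspose_apply]
  split_ifs with hpp
  · subst hpp
    refine Finset.sum_congr rfl fun s _ => ?_
    by_cases hx : x s = 0
    · simp [hx]
    · rw [hW s hx]
      split_ifs <;> simp_all [eq_comm]
  · refine Finset.sum_eq_zero fun s _ => ?_
    by_cases hx : x s = 0
    · simp [hx]
    · rw [hW s hx, hW s hx]
      split_ifs with h h' <;> simp_all

/-- The basis vector `W_b` sends `e_i ⊗ e_0` to. -/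
def flattenIndex {N a b : ℕ} (hb : 0 < b) (hba : b ≤ a) (i : Fin N) : Fin N × Fin a :=
  (⟨i / b, (Nat.div_le_self i b).trans_lt i.isLt⟩, ⟨i % b, (Nat.mod_lt i hb).trans_le hba⟩)

lemma eq_flattenIndex_iff {N a b : ℕ} (hb : 0 < b) (hba : b ≤ a) (i : Fin N)
    (p : Fin N × Fin a) :
    p = flattenIndex hb hba i ↔ (p.1 : ℕ) = i / b ∧ (p.2 : ℕ) = i % b := by
  simp [flattenIndex, Prod.ext_iff, Fin.ext_iff]

lemma flattenIndex_injective {N a b : ℕ} (hb : 0 < b) (hba : b ≤ a) :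
    Function.Injective (flattenIndex hb hba : Fin N → Fin N × Fin a) := by
  intro i i' h
  simp only [flattenIndex, Prod.ext_iff, Fin.ext_iff] at h
  ext
  rw [← Nat.div_add_mod i b, ← Nat.div_add_mod i' b, h.1, h.2]

lemma embezState_kronecker_initial (a n N : ℕ) :
    embezState a n N ⊗ₖ of (fun z z' : Fin a => if (z : ℕ) = 0 ∧ (z' : ℕ) = 0 then 1 else 0) =
      diagonal fun s : Fin N × Fin a =>
        ((if (s.2 : ℕ) = 0 then embezWeight a n s.1 else 0 : ℝ) : ℂ) := by
  have hE : of (fun z z' : Fin a => if (z : ℕ) = 0 ∧ (z' : ℕ) = 0 then (1 : ℂ) else 0) =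
      diagonal fun z : Fin a => if (z : ℕ) = 0 then 1 else 0 := by
    ext z z'
    simp only [of_apply, diagonal_apply, Fin.ext_iff]
    split_ifs <;> first | rfl | omega
  rw [embezState_eq_diagonal, hE, diagonal_kronecker_diagonal]
  congr 1; ext s; split_ifs <;> simp

lemma embezState_kronecker_flat (b n N a : ℕ) :
    embezState 1 n N ⊗ₖ of (fun z z' : Fin a => if z = z' ∧ (z : ℕ) < b then 1 else 0) =
      diagonal fun p : Fin N × Fin a =>
        ((embezWeight 1 n p.1 * if (p.2 : ℕ) < b then 1 else 0 : ℝ) : ℂ) := by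
  have hE : of (fun z z' : Fin a => if z = z' ∧ (z : ℕ) < b then (1 : ℂ) else 0) =
      diagonal fun z : Fin a => if (z : ℕ) < b then 1 else 0 := by
    ext z z'
    simp only [of_apply, diagonal_apply]
    split_ifs <;> first | rfl | omega
  rw [embezState_eq_diagonal, hE, diagonal_kronecker_diagonal]
  congr 1; ext s; split_ifs <;> simp

lemma flattening_conj_loewner_le {a b n N : ℕ} {K : ℝ} (hb : 0 < b) (hba : b ≤ a) (hK0 : 0 ≤ K)
    (hK : harmSum 1 n ≤ K * harmSum a n) (W : Matrix (Fin N × Fin a) (Fin N × Fin a) ℂ)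
    (hW : ∀ (i : Fin N) (p : Fin N × Fin a) (z : Fin a), (z : ℕ) = 0 →
      W p (i, z) = if (p.1 : ℕ) = (i : ℕ) / b ∧ (p.2 : ℕ) = (i : ℕ) % b then 1 else 0) :
    ((K : ℂ) • (embezState 1 n N ⊗ₖ
        of (fun z z' : Fin a => if z = z' ∧ (z : ℕ) < b then 1 else 0))
      - (b : ℂ) • (W * (embezState a n N ⊗ₖ
        of (fun z z' : Fin a => if (z : ℕ) = 0 ∧ (z' : ℕ) = 0 then 1 else 0))
        * Wᴴ)).PosSemidef := by
  set f : Fin N × Fin a → Fin N × Fin a := fun s => flattenIndex hb hba s.1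
  set x : Fin N × Fin a → ℝ := fun s => if (s.2 : ℕ) = 0 then embezWeight a n s.1 else 0
  set y : Fin N × Fin a → ℝ := fun p => embezWeight 1 n p.1 * if (p.2 : ℕ) < b then 1 else 0
  have hWf : ∀ s, (x s : ℂ) ≠ 0 → ∀ p, W p s = if p = f s then 1 else 0 := by
    rintro ⟨i, z⟩ hs p
    have hz : (z : ℕ) = 0 := by by_contra h; simp [x, h] at hs
    simp only [hW i p z hz, f, eq_flattenIndex_iff]
  rw [embezState_kronecker_initial, embezState_kronecker_flat,
    mul_diagonal_mul_conjTranspose_eq_diagonal W _ f hWf, ← diagonal_smul, ← diagonal_smul,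
    diagonal_sub, posSemidef_diagonal_iff]
  intro p
  convert Complex.zero_le_real.2 (sub_nonneg.2 (?_ : b * ∑ s with f s = p, x s ≤ K * y p))
    using 1
  · simp only [Pi.smul_apply, smul_eq_mul, y, Complex.ofReal_sub, Complex.ofReal_mul,
      Complex.ofReal_sum, Complex.ofReal_natCast]
  rw [Finset.mul_sum]
  have hy : 0 ≤ y p := mul_nonneg (embezWeight_nonneg 1 n _) (by positivity)
  refine Finset.sum_fiber_le_of_injOn (S := {s | (s.2 : ℕ) = 0}) ?_ ?_ (mul_nonneg hK0 hy) ?_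
  · rintro ⟨i, z⟩ hz ⟨i', z'⟩ hz' h
    exact Prod.ext (flattenIndex_injective hb hba h) (Fin.ext (hz.trans hz'.symm))
  · rintro ⟨i, z⟩ (hz : (z : ℕ) ≠ 0)
    simp [x, hz]
  · rintro ⟨i, z⟩ rfl
    by_cases hz : (z : ℕ) = 0
    · simpa [x, y, f, hz, flattenIndex, Nat.mod_lt _ hb] using
        mul_embezWeight_le_embezWeight_div hb hba hK0 hK i
    · simpa [x, hz] using mul_nonneg hK0 hy

lemma Matrix.sum_kronecker {ι l m n p R : Type*} [NonUnitalNonAssocSemiring R] (s : Finset ι)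
    (A : ι → Matrix l m R) (B : Matrix n p R) :
    (∑ c ∈ s, A c) ⊗ₖ B = ∑ c ∈ s, A c ⊗ₖ B := by
  ext ⟨i, j⟩ ⟨i', j'⟩
  simp [kroneckerMap_apply, Matrix.sum_apply, Finset.sum_mul]

lemma smul_sum_kronecker_sub_sum_kronecker {I l m n p R : Type*} [Fintype I] [CommRing R]
    (r s : R) (u : I → R) (P : I → Matrix l m R) (Y Z : I → Matrix n p R) :
    r • s • ∑ c, P c ⊗ₖ Y c - ∑ c, (s * u c) • P c ⊗ₖ Z c =
      ∑ c, P c ⊗ₖ (s • (r • Y c - u c • Z c)) := by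
  rw [Finset.smul_sum, Finset.smul_sum, ← Finset.sum_sub_distrib]
  refine Finset.sum_congr rfl fun c _ => ?_
  ext ⟨i, j⟩ ⟨i', j'⟩
  simp only [Matrix.sub_apply, Matrix.smul_apply, kroneckerMap_apply, smul_eq_mul]
  ring

section Kronecker

variable {I m k R : Type*} [Fintype m] [DecidableEq I] [CommSemiring R]

lemma vecMulVec_mul_vecMulVec_of_orthonormal [StarRing R] (v : I → m → R)
    (hv : ∀ c c', star (v c) ⬝ᵥ v c' = if c = c' then 1 else 0) (c c' : I) :
    vecMulVec (v c) (star (v c)) * vecMulVec (v c') (star (v c')) =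
      if c = c' then vecMulVec (v c) (star (v c)) else 0 := by
  rw [vecMulVec_mul_vecMulVec, hv]
  split_ifs with h
  · rw [h, one_smul]
  · rw [zero_smul, vecMulVec_zero]

variable [Fintype I] [Fintype k] {P : I → Matrix m m R}
  (hP : ∀ c c', P c * P c' = if c = c' then P c else 0)
include hP

lemma sum_kronecker_mul_kronecker_of_orthogonal (W : I → Matrix k k R) (c : I)
    (X : Matrix k k R) : (∑ c', P c' ⊗ₖ W c') * (P c ⊗ₖ X) = P c ⊗ₖ (W c * X) := by
  rw [Finset.sum_mul, Finset.sum_eq_single c]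
  · rw [← mul_kronecker_mul, hP, if_pos rfl]
  · intro c' _ hc'
    rw [← mul_kronecker_mul, hP, if_neg hc', zero_kronecker]
  · simp

lemma kronecker_mul_sum_kronecker_of_orthogonal (W : I → Matrix k k R) (c : I)
    (X : Matrix k k R) : (P c ⊗ₖ X) * (∑ c', P c' ⊗ₖ W c') = P c ⊗ₖ (X * W c) := by
  rw [Finset.mul_sum, Finset.sum_eq_single c]
  · rw [← mul_kronecker_mul, hP, if_pos rfl]
  · intro c' _ hc'
    rw [← mul_kronecker_mul, hP, if_neg hc'.symm, zero_kronecker]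
  · simp

lemma sum_kronecker_mul_kronecker_mul_conjTranspose [StarRing R] (hPH : ∀ c, (P c)ᴴ = P c)
    (q : I → R) (W : I → Matrix k k R) (X : Matrix k k R) :
    (∑ c, P c ⊗ₖ W c) * ((∑ c, q c • P c) ⊗ₖ X) * (∑ c, P c ⊗ₖ W c)ᴴ =
      ∑ c, q c • (P c ⊗ₖ (W c * X * (W c)ᴴ)) := by
  have hWH : (∑ c, P c ⊗ₖ W c)ᴴ = ∑ c, P c ⊗ₖ (W c)ᴴ := by
    simp only [conjTranspose_sum, conjTranspose_kronecker, hPH]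
  rw [Matrix.sum_kronecker, Finset.mul_sum, Finset.sum_mul, hWH]
  refine Finset.sum_congr rfl fun c _ => ?_
  rw [smul_kronecker, mul_smul_comm, smul_mul_assoc, sum_kronecker_mul_kronecker_of_orthogonal hP,
    kronecker_mul_sum_kronecker_of_orthogonal hP]

end Kronecker

theorem flatten_embezzle_first_general {I : Type*} [Fintype I] [DecidableEq I] [Nonempty I]
    (δ γ : ℝ) (hδ0 : 0 < δ) (hδ : δ < 1 / 15) (hγ0 : 0 < γ)
    (d : ℕ) (hd : 0 < d)
    (q : I → ℝ)
    (v : I → Fin d → ℂ)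
    (hv : ∀ c c' : I, ∑ i, (starRingEnd ℂ) (v c i) * v c' i = if c = c' then 1 else 0)
    (b : I → ℕ) (hbpos : ∀ c, 0 < b c) (hb : ∀ c, ((b c : ℕ) : ℝ) = q c * d / γ)
    (a : ℕ) (ha : (a : ℝ) = ((d : ℝ) / γ) * (Finset.univ.sup' Finset.univ_nonempty q))
    (n N : ℕ) (hn : ((a : ℝ)) ^ ((1 : ℝ) / δ) ≤ (n : ℝ))
    (Wb : I → Matrix (Fin N × Fin a) (Fin N × Fin a) ℂ)
    (hWcol : ∀ (c : I) (i : Fin N) (p : Fin N × Fin a) (z : Fin a), (z : ℕ) = 0 →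
      Wb c p (i, z) =
        if (p.1 : ℕ) = (i : ℕ) / b c ∧ (p.2 : ℕ) = (i : ℕ) % b c then 1 else 0) :
    ((((1 + 15 * δ : ℝ)) : ℂ) • (((γ / (d : ℝ) : ℝ) : ℂ) •
        ∑ c, Matrix.vecMulVec (v c) (star (v c)) ⊗ₖ
          (embezState 1 n N ⊗ₖ
            Matrix.of (fun z z' : Fin a => if z = z' ∧ (z : ℕ) < b c then 1 else 0)))
      - (∑ c, Matrix.vecMulVec (v c) (star (v c)) ⊗ₖ Wb c)
          * ((∑ c, ((q c : ℝ) : ℂ) • Matrix.vecMulVec (v c) (star (v c))) ⊗ₖ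
              (embezState a n N ⊗ₖ
                Matrix.of (fun z z' : Fin a =>
                  if (z : ℕ) = 0 ∧ (z' : ℕ) = 0 then 1 else 0)))
          * (∑ c, Matrix.vecMulVec (v c) (star (v c)) ⊗ₖ Wb c)ᴴ).PosSemidef := by
  have hγd : 0 < γ / d := by positivity
  have hba : ∀ c, b c ≤ a := fun c => by
    have : (b c : ℝ) ≤ a := by
      rw [hb c, ha, show q c * d / γ = d / γ * q c by ring]
      exact mul_le_mul_of_nonneg_left (Finset.le_sup' q (Finset.mem_univ c)) (by positivity)
    exact_mod_cast this
  have hK := harmSum_one_le_mul_harmSum hδ0 hδ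
    ((hbpos (Classical.arbitrary I)).trans_le (hba _)) hn
  rw [sum_kronecker_mul_kronecker_mul_conjTranspose (vecMulVec_mul_vecMulVec_of_orthonormal v hv)
    (fun c => (posSemidef_vecMulVec_self_star (v c)).isHermitian.eq)]
  have hq : ∀ c, ((q c : ℝ) : ℂ) = ((γ / d : ℝ) : ℂ) * b c := fun c => by
    rw [← Complex.ofReal_natCast, ← Complex.ofReal_mul, hb c]
    field_simp
  simp only [hq, smul_sum_kronecker_sub_sum_kronecker]
  exact posSemidef_sum _ fun c _ => (posSemidef_vecMulVec_self_star (v c)).kronecker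
    ((flattening_conj_loewner_le (hbpos c) (hba c) (by linarith) hK (Wb c) (hWcol c)).smul
      (Complex.zero_le_real.2 hγd.le))

/-- Coherent flattening via embezzlement, first inequality:
`W (ρ ⊗ ξ_{a:n} ⊗ |0⟩⟨0|) W* ≼ (1+15δ) · (γ/d) ∑_c |v_c⟩⟨v_c| ⊗ ξ_{1:n} ⊗ ∑_{e<b(c)} |e⟩⟨e|`. -/
theorem flatten_embezzle_first {I : Type*} [Fintype I] [DecidableEq I] [Nonempty I]
    (δ γ : ℝ) (hδ0 : 0 < δ) (hδ : δ < 1 / 15) (hγ0 : 0 < γ) (hγ1 : γ < 1)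
    (d : ℕ) (hd : 0 < d) (dγ : ℕ) (hdγ : (dγ : ℝ) = (d : ℝ) / γ)
    (q : I → ℝ) (hq : ∀ c, 0 < q c)
    (v : I → Fin d → ℂ)
    (hv : ∀ c c' : I, ∑ i, (starRingEnd ℂ) (v c i) * v c' i = if c = c' then 1 else 0)
    (hρ : IsDensityMatrix (∑ c, ((q c : ℝ) : ℂ) • Matrix.vecMulVec (v c) (star (v c))))
    (b : I → ℕ) (hbpos : ∀ c, 0 < b c) (hb : ∀ c, ((b c : ℕ) : ℝ) = q c * d / γ)
    (a : ℕ) (ha : (a : ℝ) = ((d : ℝ) / γ) * (Finset.univ.sup' Finset.univ_nonempty q))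
    (n N : ℕ) (hn : ((a : ℝ)) ^ ((1 : ℝ) / δ) ≤ (n : ℝ)) (hN : n ≤ N)
    (Wb : I → Matrix (Fin N × Fin a) (Fin N × Fin a) ℂ)
    (hWb : ∀ c, Wb c ∈ Matrix.unitaryGroup (Fin N × Fin a) ℂ)
    (hWcol : ∀ (c : I) (i : Fin N) (p : Fin N × Fin a) (z : Fin a), (z : ℕ) = 0 →
      Wb c p (i, z) =
        if (p.1 : ℕ) = (i : ℕ) / b c ∧ (p.2 : ℕ) = (i : ℕ) % b c then 1 else 0) :
    ((((1 + 15 * δ : ℝ)) : ℂ) • (((γ / (d : ℝ) : ℝ) : ℂ) •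
        ∑ c, Matrix.vecMulVec (v c) (star (v c)) ⊗ₖ
          (embezState 1 n N ⊗ₖ
            Matrix.of (fun z z' : Fin a => if z = z' ∧ (z : ℕ) < b c then 1 else 0)))
      - (∑ c, Matrix.vecMulVec (v c) (star (v c)) ⊗ₖ Wb c)
          * ((∑ c, ((q c : ℝ) : ℂ) • Matrix.vecMulVec (v c) (star (v c))) ⊗ₖ
              (embezState a n N ⊗ₖ
                Matrix.of (fun z z' : Fin a =>
                  if (z : ℕ) = 0 ∧ (z' : ℕ) = 0 then 1 else 0)))
          * (∑ c, Matrix.vecMulVec (v c) (star (v c)) ⊗ₖ Wb c)ᴴ).PosSemidef :=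
  flatten_embezzle_first_general δ γ hδ0 hδ hγ0 d hd q v hv b hbpos hb a ha n N hn Wb hWcol
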